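/- Let d ∈ (0,1) and define the Henrick mapping g_d(ω) = ω·(d + d² − 3dω + ω²)/(d² + ω(1 − 2d)). Then: (i) the denominator d² + ω(1 − 2d) is strictly positive for every ω ∈ [0,1]; (ii) g_d(0) = 0 and g_d(1) = 1; (iii) 0 ≤ g_d(ω) ≤ 1 for every ω ∈ [0,1]; (iv) g_d is monotone non-decreasing on [0,1]; (v) g_d(d) = d, g_d'(d) = 0 and g_d''(d) = 0. -/

import Mathlib

/-!
The denominator `d² + ω(1 - 2d)` is the convex combination `(1 - ω) d² + ω (1 - d)²` of two
positive squares. The derivative factors as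
`g_d'(ω) = (ω - d)² ((1 - ω) d(d + 1) + ω (1 - d)(2 - d)) / (d² + ω(1 - 2d))²`,
a square times a convex combination of two positive numbers, so `g_d` is monotone on `[0,1]` and
maps it into `[g_d(0), g_d(1)] = [0,1]`. The double zero of `g_d'` at `d` gives `g_d'(d) = 0`
and `g_d''(d) = 0`.
-/

/-- The Henrick–Aslam–Powers mapping function of the WENO-M scheme. -/
noncomputable def henrick (d ω : ℝ) : ℝ :=
  ω * (d + d ^ 2 - 3 * d * ω + ω ^ 2) / (d ^ 2 + ω * (1 - 2 * d))

open Set Filter Topology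

theorem deriv_eq_zero_of_eventuallyEq_sq_mul {𝕜 : Type*} [NontriviallyNormedField 𝕜]
    {f r : 𝕜 → 𝕜} {a : 𝕜} (hr : DifferentiableAt 𝕜 r a)
    (hf : f =ᶠ[𝓝 a] fun x => (x - a) ^ 2 * r x) : deriv f a = 0 := by
  rw [hf.deriv_eq]
  exact ((((hasDerivAt_id a).sub_const a).pow 2).mul hr.hasDerivAt).deriv.trans (by simp)

section

variable {d ω : ℝ}

theorem henrick_denom_pos (hd0 : d ≠ 0) (hd1 : d ≠ 1) (hω : ω ∈ Icc (0 : ℝ) 1) :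
    0 < d ^ 2 + ω * (1 - 2 * d) := by
  have hconvex : d ^ 2 + ω * (1 - 2 * d) = (1 - ω) * d ^ 2 + ω * (1 - d) ^ 2 := by ring
  have hsub : 1 - d ≠ 0 := sub_ne_zero.2 (Ne.symm hd1)
  have hsq0 : 0 < d ^ 2 := by positivity
  have hsq1 : 0 < (1 - d) ^ 2 := by positivity
  rw [hconvex]
  rcases le_total (d ^ 2) ((1 - d) ^ 2) with h | h
  · nlinarith [mul_nonneg hω.1 (sub_nonneg.2 h)]
  · nlinarith [mul_nonneg (sub_nonneg.2 hω.2) (sub_nonneg.2 h)]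

theorem henrick_zero (d : ℝ) : henrick d 0 = 0 := by simp [henrick]

theorem henrick_one (hd1 : d ≠ 1) : henrick d 1 = 1 := by
  have hden : d ^ 2 + 1 * (1 - 2 * d) = (1 - d) ^ 2 := by ring
  rw [henrick, div_eq_one_iff_eq (hden ▸ pow_ne_zero 2 (sub_ne_zero.2 (Ne.symm hd1)))]
  ring

theorem henrick_denom_self_ne_zero (hd0 : d ≠ 0) (hd1 : d ≠ 1) :
    d ^ 2 + d * (1 - 2 * d) ≠ 0 := by
  have hden : d ^ 2 + d * (1 - 2 * d) = d * (1 - d) := by ring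
  exact hden ▸ mul_ne_zero hd0 (sub_ne_zero.2 (Ne.symm hd1))

theorem henrick_self (hd0 : d ≠ 0) (hd1 : d ≠ 1) : henrick d d = d := by
  rw [henrick, div_eq_iff (henrick_denom_self_ne_zero hd0 hd1)]
  ring

theorem hasDerivAt_henrick (hD : d ^ 2 + ω * (1 - 2 * d) ≠ 0) :
    HasDerivAt (henrick d)
      ((ω - d) ^ 2 * ((1 - ω) * (d * (d + 1)) + ω * ((1 - d) * (2 - d)))
        / (d ^ 2 + ω * (1 - 2 * d)) ^ 2) ω := by
  have hnum : HasDerivAt (fun ω : ℝ => ω * (d + d ^ 2 - 3 * d * ω + ω ^ 2))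
      (d + d ^ 2 - 6 * d * ω + 3 * ω ^ 2) ω := by
    refine ((hasDerivAt_id' ω).mul (((hasDerivAt_id' ω).const_mul (3 * d)).const_sub (d + d ^ 2)
      |>.add (hasDerivAt_pow 2 ω))).congr_deriv ?_
    norm_num
    ring
  have hden : HasDerivAt (fun ω : ℝ => d ^ 2 + ω * (1 - 2 * d)) (1 - 2 * d) ω := by
    simpa using ((hasDerivAt_id' ω).mul_const (1 - 2 * d)).const_add (d ^ 2)
  refine (hnum.div hden hD).congr_deriv ?_
  congr 1
  ring

theorem monotoneOn_henrick (hd : d ∈ Ioo (0 : ℝ) 1) : MonotoneOn (henrick d) (Icc 0 1) := by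
  have hD : ∀ ω ∈ Icc (0 : ℝ) 1, d ^ 2 + ω * (1 - 2 * d) ≠ 0 := fun ω hω =>
    (henrick_denom_pos hd.1.ne' hd.2.ne hω).ne'
  refine monotoneOn_of_deriv_nonneg (convex_Icc 0 1)
    (fun ω hω => (hasDerivAt_henrick (hD ω hω)).continuousAt.continuousWithinAt)
    (fun ω hω => (hasDerivAt_henrick (hD ω (interior_subset hω))).differentiableAt
      |>.differentiableWithinAt) fun ω hω => ?_
  obtain ⟨hω0, hω1⟩ := interior_subset hω
  rw [(hasDerivAt_henrick (hD ω ⟨hω0, hω1⟩)).deriv]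
  have hfactor : 0 ≤ (1 - ω) * (d * (d + 1)) + ω * ((1 - d) * (2 - d)) :=
    add_nonneg (mul_nonneg (by linarith) (mul_nonneg hd.1.le (by linarith [hd.1])))
      (mul_nonneg hω0 (mul_nonneg (by linarith [hd.2]) (by linarith [hd.2])))
  positivity

theorem henrick_mem_Icc (hd : d ∈ Ioo (0 : ℝ) 1) (hω : ω ∈ Icc (0 : ℝ) 1) :
    henrick d ω ∈ Icc (0 : ℝ) 1 := by
  have hmono := monotoneOn_henrick hd
  constructor
  · simpa only [henrick_zero] using hmono ⟨le_rfl, zero_le_one⟩ hω hω.1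
  · simpa only [henrick_one hd.2.ne] using hmono hω ⟨zero_le_one, le_rfl⟩ hω.2

theorem deriv_henrick_self (hd0 : d ≠ 0) (hd1 : d ≠ 1) : deriv (henrick d) d = 0 := by
  simp [(hasDerivAt_henrick (henrick_denom_self_ne_zero hd0 hd1)).deriv]

theorem deriv_deriv_henrick_self (hd0 : d ≠ 0) (hd1 : d ≠ 1) :
    deriv (deriv (henrick d)) d = 0 := by
  have hD := henrick_denom_self_ne_zero hd0 hd1
  refine deriv_eq_zero_of_eventuallyEq_sq_mul
    (r := fun ω => ((1 - ω) * (d * (d + 1)) + ω * ((1 - d) * (2 - d)))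
      / (d ^ 2 + ω * (1 - 2 * d)) ^ 2)
    ((by fun_prop : DifferentiableAt ℝ _ d).div (by fun_prop) (pow_ne_zero 2 hD)) ?_
  have hcont : ContinuousAt (fun ω : ℝ => d ^ 2 + ω * (1 - 2 * d)) d := by fun_prop
  filter_upwards [hcont.eventually_ne hD] with ω hω
  exact (hasDerivAt_henrick hω).deriv.trans (mul_div_assoc _ _ _)

end

/-- Basic properties of the Henrick mapping `g_d` for `d ∈ (0,1)`:
positive denominator on `[0,1]`, fixed endpoints, range in `[0,1]`, monotonicity,
and `g_d(d) = d`, `g_d'(d) = g_d''(d) = 0`. -/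
theorem henrick_mapping_properties (d : ℝ) (hd : d ∈ Set.Ioo (0 : ℝ) 1) :
    (∀ ω ∈ Set.Icc (0 : ℝ) 1, 0 < d ^ 2 + ω * (1 - 2 * d)) ∧
    henrick d 0 = 0 ∧
    henrick d 1 = 1 ∧
    (∀ ω ∈ Set.Icc (0 : ℝ) 1, henrick d ω ∈ Set.Icc (0 : ℝ) 1) ∧
    MonotoneOn (henrick d) (Set.Icc (0 : ℝ) 1) ∧
    henrick d d = d ∧
    deriv (henrick d) d = 0 ∧
    deriv (deriv (henrick d)) d = 0 := by
  have hd0 : d ≠ 0 := hd.1.ne'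
  have hd1 : d ≠ 1 := hd.2.ne
  exact ⟨fun _ hω => henrick_denom_pos hd0 hd1 hω, henrick_zero d, henrick_one hd1,
    fun _ hω => henrick_mem_Icc hd hω, monotoneOn_henrick hd, henrick_self hd0 hd1,
    deriv_henrick_self hd0 hd1, deriv_deriv_henrick_self hd0 hd1⟩
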